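/- (Holevo–Helstrom, optimality.) For any two density matrices ρ and σ on ℂ^d and any measurement operator M (i.e., any d×d complex matrix with 0 ⪯ M ⪯ I in the Loewner order), the success probability of the distinguisher that receives ρ or σ each with probability 1/2 and guesses 'ρ' exactly on outcome M, namely (1/2)·Tr(Mρ) + (1/2)·Tr((I−M)σ), is at most (1/2)(1 + TD(ρ,σ)). -/

import Mathlib

open Matrix ComplexOrder

/-- The trace norm of a matrix: `‖X‖₁ = Tr √(Xᴴ X)`. -/
noncomputable def traceNorm {d : ℕ} (X : Matrix (Fin d) (Fin d) ℂ) : ℝ :=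
  (((Matrix.posSemidef_conjTranspose_mul_self X).1.eigenvectorUnitary.1 *
      diagonal (((↑) : ℝ → ℂ) ∘ Real.sqrt ∘ (Matrix.posSemidef_conjTranspose_mul_self X).1.eigenvalues) *
      (star (Matrix.posSemidef_conjTranspose_mul_self X).1.eigenvectorUnitary :
        Matrix (Fin d) (Fin d) ℂ)).trace).re

/-- The trace distance between two matrices: `TD(ρ,σ) = ‖ρ − σ‖₁ / 2`. -/
noncomputable def traceDist {d : ℕ} (ρ σ : Matrix (Fin d) (Fin d) ℂ) : ℝ :=
  traceNorm (ρ - σ) / 2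

/-- A density matrix: positive semidefinite with trace 1. -/
def IsDensityMatrix {d : ℕ} (ρ : Matrix (Fin d) (Fin d) ℂ) : Prop :=
  ρ.PosSemidef ∧ ρ.trace = 1

/-! With `Δ = ρ - σ`, the success probability equals `(1 + Re Tr(MΔ)) / 2`. Splitting
`Δ = Δ⁺ - Δ⁻` into positive parts, `0 ⪯ M ⪯ 1` gives `Tr(MΔ) ≤ Tr(MΔ⁺) ≤ Tr Δ⁺`, and since
`Δ⁺ + Δ⁻ = |Δ|` while `Tr Δ = 0`, `Tr Δ⁺ = ‖Δ‖₁ / 2 = TD(ρ, σ)`. -/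

open scoped MatrixOrder

namespace Matrix

variable {n 𝕜 : Type*} [Fintype n] [DecidableEq n] [RCLike 𝕜]

theorem PosSemidef.trace_mul_nonneg {A B : Matrix n n 𝕜} (hA : A.PosSemidef) (hB : B.PosSemidef) :
    0 ≤ (A * B).trace := by
  have hB_sq : B = CFC.sqrt B * CFC.sqrt B := (CFC.sqrt_mul_sqrt_self B hB.nonneg).symm
  have hsqrt_herm : (CFC.sqrt B)ᴴ = CFC.sqrt B := (CFC.sqrt_nonneg B).isSelfAdjoint
  rw [hB_sq, ← mul_assoc, trace_mul_cycle]
  simpa [hsqrt_herm] using (hA.mul_mul_conjTranspose_same (CFC.sqrt B)).trace_nonneg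

theorem re_trace_mul_le_re_trace_posPart {M Δ : Matrix n n 𝕜} (hΔ : Δ.IsHermitian)
    (hM : M.PosSemidef) (hM' : (1 - M).PosSemidef) :
    RCLike.re (M * Δ).trace ≤ RCLike.re (Δ⁺).trace := by
  have hpos : (Δ⁺).PosSemidef := (CFC.posPart_nonneg Δ).posSemidef
  have hneg : (Δ⁻).PosSemidef := (CFC.negPart_nonneg Δ).posSemidef
  have hsplit : M * Δ = Δ⁺ - (1 - M) * Δ⁺ - M * Δ⁻ := by
    conv_lhs => rw [← CFC.posPart_sub_negPart Δ hΔ.isSelfAdjoint]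
    noncomm_ring
  have hslack := RCLike.nonneg_iff.mp (hM'.trace_mul_nonneg hpos)
  have hloss := RCLike.nonneg_iff.mp (hM.trace_mul_nonneg hneg)
  rw [hsplit, trace_sub, trace_sub, map_sub, map_sub]
  linarith [hslack.1, hloss.1]

end Matrix

theorem traceNorm_eq_re_trace_abs {d : ℕ} (X : Matrix (Fin d) (Fin d) ℂ) :
    traceNorm X = (CFC.abs X).trace.re := by
  rw [CFC.abs, CFC.sqrt_eq_real_sqrt _ (star_mul_self_nonneg X), cfcₙ_eq_cfc (hf0 := Real.sqrt_zero),
    star_eq_conjTranspose, (posSemidef_conjTranspose_mul_self X).1.cfc_eq]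
  rfl

theorem two_mul_re_trace_posPart {d : ℕ} {Δ : Matrix (Fin d) (Fin d) ℂ} (hΔ : Δ.IsHermitian) :
    2 * (Δ⁺).trace.re = traceNorm Δ + Δ.trace.re := by
  rw [traceNorm_eq_re_trace_abs, ← Complex.add_re, ← trace_add, CFC.abs_add_self Δ hΔ.isSelfAdjoint,
    trace_smul]
  simp

/-- Holevo–Helstrom (optimality): for any measurement operator `0 ⪯ M ⪯ I`, the success
probability `(1/2)·Tr(Mρ) + (1/2)·Tr((I−M)σ)` of distinguishing `ρ` from `σ`
is at most `(1/2)(1 + TD(ρ,σ))`. -/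
theorem holevo_helstrom_optimality {d : ℕ} {ρ σ M : Matrix (Fin d) (Fin d) ℂ}
    (hρ : IsDensityMatrix ρ) (hσ : IsDensityMatrix σ)
    (hM : M.PosSemidef) (hM' : ((1 : Matrix (Fin d) (Fin d) ℂ) - M).PosSemidef) :
    (1 / 2) * ((M * ρ).trace).re + (1 / 2) * ((((1 : Matrix (Fin d) (Fin d) ℂ) - M) * σ).trace).re
      ≤ (1 / 2) * (1 + traceDist ρ σ) := by
  have hΔ : (ρ - σ).IsHermitian := hρ.1.1.sub hσ.1.1
  have htrace : (ρ - σ).trace = 0 := by rw [trace_sub, hρ.2, hσ.2, sub_self]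
  have hbias : (M * ρ).trace.re - (M * σ).trace.re ≤ ((ρ - σ)⁺).trace.re := by
    simpa [Matrix.mul_sub] using re_trace_mul_le_re_trace_posPart hΔ hM hM'
  have hpos : 2 * ((ρ - σ)⁺).trace.re = traceNorm (ρ - σ) := by
    simpa [htrace] using two_mul_re_trace_posPart hΔ
  have hreject : ((1 - M) * σ).trace.re = 1 - (M * σ).trace.re := by
    rw [Matrix.sub_mul, Matrix.one_mul, trace_sub, Complex.sub_re, hσ.2, Complex.one_re]
  rw [hreject, traceDist]
  linarith
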